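/- arXiv:1911.08063 — 2 statements merged into one kernel-verified Lean document; each statement's English description precedes it below -/
import Mathlib

section
/- Let Γ̂ be a symmetric n × n matrix satisfying the restricted eigenvalue condition βᵀΓ̂β ≥ κ_l‖β‖₂² − τ for all β ∈ ℬ_q(2R_q), with κ_l > 0 and τ ≥ 0. Let β* ∈ ℬ_q(R_q), let Υ̂ ∈ ℝⁿ, and let β̂ ∈ ℬ_q(R_q) satisfy (1/2)β̂ᵀΓ̂β̂ − Υ̂ᵀβ̂ ≤ (1/2)β*ᵀΓ̂β* − Υ̂ᵀβ*. Then, with Δ̂ := β̂ − β*, it holds that κ_l‖Δ̂‖₂² − τ ≤ 2‖Δ̂‖₁ · ‖Υ̂ − Γ̂β*‖_∞. -/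
/-! The quadratic objective expands around `βstar` as
`f(βhat) - f(βstar) = ½ Δᵀ Γ Δ - (Υ - Γ βstar)ᵀ Δ` with `Δ = βhat - βstar`, so optimality of `βhat`
bounds `Δᵀ Γ Δ` by `2 (Υ - Γ βstar)ᵀ Δ ≤ 2 ‖Δ‖₁ ‖Υ - Γ βstar‖_∞`. Since `t ↦ t ^ q` is subadditive
for `q ∈ [0, 1]`, `Δ` lies in `ℬ_q(2 Rq)`, where the restricted eigenvalue condition bounds
`Δᵀ Γ Δ` from below. -/

open Matrix

variable {ι R : Type*} [Fintype ι]

lemma sum_abs_sub_rpow_le {q : ℝ} (hq0 : 0 ≤ q) (hq1 : q ≤ 1) (x y : ι → ℝ) :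
    ∑ j, |x j - y j| ^ q ≤ ∑ j, |x j| ^ q + ∑ j, |y j| ^ q := by
  rw [← Finset.sum_add_distrib]
  gcongr with j
  calc |x j - y j| ^ q ≤ (|x j| + |y j|) ^ q := by gcongr; exact abs_sub _ _
    _ ≤ |x j| ^ q + |y j| ^ q := Real.rpow_add_le_add_rpow (abs_nonneg _) (abs_nonneg _) hq0 hq1

lemma dotProduct_le_sum_abs_mul_norm (v w : ι → ℝ) : v ⬝ᵥ w ≤ (∑ j, |w j|) * ‖v‖ := by
  rw [Finset.sum_mul]
  refine Finset.sum_le_sum fun j _ => ?_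
  calc v j * w j ≤ |v j| * |w j| := by rw [← abs_mul]; exact le_abs_self _
    _ ≤ ‖v‖ * |w j| := by gcongr; exact norm_le_pi_norm v j
    _ = |w j| * ‖v‖ := mul_comm _ _

namespace Matrix.IsSymm

lemma dotProduct_mulVec_comm [CommSemiring R] {Γ : Matrix ι ι R} (hΓ : Γ.IsSymm) (x y : ι → R) :
    x ⬝ᵥ Γ *ᵥ y = y ⬝ᵥ Γ *ᵥ x := by
  simpa only [hΓ.eq] using dotProduct_transpose_mulVec Γ x y

lemma dotProduct_mulVec_sub_sub [CommRing R] {Γ : Matrix ι ι R} (hΓ : Γ.IsSymm)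
    (Υ x y : ι → R) :
    (x - y) ⬝ᵥ Γ *ᵥ (x - y) =
      (x ⬝ᵥ Γ *ᵥ x - 2 * Υ ⬝ᵥ x) - (y ⬝ᵥ Γ *ᵥ y - 2 * Υ ⬝ᵥ y) +
        2 * ((Υ - Γ *ᵥ y) ⬝ᵥ (x - y)) := by
  have hxy := hΓ.dotProduct_mulVec_comm x y
  have hyx : (Γ *ᵥ y) ⬝ᵥ x = y ⬝ᵥ Γ *ᵥ x := by rw [dotProduct_comm, hxy]
  simp only [mulVec_sub, sub_dotProduct, dotProduct_sub, hxy, hyx, dotProduct_comm (Γ *ᵥ y) y]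
  ring

lemma dotProduct_mulVec_sub_le_of_objective_le {Γ : Matrix ι ι ℝ} (hΓ : Γ.IsSymm)
    {Υ x y : ι → ℝ}
    (hxy : (1 / 2) * (x ⬝ᵥ Γ *ᵥ x) - Υ ⬝ᵥ x ≤ (1 / 2) * (y ⬝ᵥ Γ *ᵥ y) - Υ ⬝ᵥ y) :
    (x - y) ⬝ᵥ Γ *ᵥ (x - y) ≤ 2 * ((Υ - Γ *ᵥ y) ⬝ᵥ (x - y)) := by
  rw [hΓ.dotProduct_mulVec_sub_sub Υ]
  linarith

end Matrix.IsSymm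

theorem basic_inequality_re_general {n : ℕ} (q Rq κl τ : ℝ) (hq0 : 0 ≤ q) (hq1 : q ≤ 1)
    (Γ : Matrix (Fin n) (Fin n) ℝ) (hΓ : Γ.IsSymm) (Υ βstar βhat : Fin n → ℝ)
    (hRE : ∀ β : Fin n → ℝ, ∑ j, |β j| ^ q ≤ 2 * Rq →
      κl * ∑ j, (β j) ^ 2 - τ ≤ β ⬝ᵥ (Γ *ᵥ β))
    (hβstar : ∑ j, |βstar j| ^ q ≤ Rq) (hβhat : ∑ j, |βhat j| ^ q ≤ Rq)
    (hopt : (1 / 2) * (βhat ⬝ᵥ (Γ *ᵥ βhat)) - Υ ⬝ᵥ βhat ≤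
      (1 / 2) * (βstar ⬝ᵥ (Γ *ᵥ βstar)) - Υ ⬝ᵥ βstar) :
    κl * (∑ j, (βhat j - βstar j) ^ 2) - τ ≤
      2 * (∑ j, |βhat j - βstar j|) * ‖Υ - Γ *ᵥ βstar‖ := by
  have hΔ : ∑ j, |βhat j - βstar j| ^ q ≤ 2 * Rq := by
    linarith [sum_abs_sub_rpow_le hq0 hq1 βhat βstar]
  calc κl * (∑ j, (βhat j - βstar j) ^ 2) - τ
      ≤ (βhat - βstar) ⬝ᵥ Γ *ᵥ (βhat - βstar) := hRE (βhat - βstar) hΔ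
    _ ≤ 2 * ((Υ - Γ *ᵥ βstar) ⬝ᵥ (βhat - βstar)) :=
      hΓ.dotProduct_mulVec_sub_le_of_objective_le hopt
    _ ≤ 2 * (∑ j, |βhat j - βstar j|) * ‖Υ - Γ *ᵥ βstar‖ := by
      rw [mul_assoc]
      gcongr
      exact dotProduct_le_sum_abs_mul_norm _ _

theorem basic_inequality_re {n : ℕ} (q Rq κl τ : ℝ) (hq0 : 0 ≤ q) (hq1 : q ≤ 1)
    (hκl : 0 < κl) (hτ : 0 ≤ τ)
    (Γ : Matrix (Fin n) (Fin n) ℝ) (hΓ : Γ.IsSymm) (Υ βstar βhat : Fin n → ℝ)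
    (hRE : ∀ β : Fin n → ℝ, ∑ j, |β j| ^ q ≤ 2 * Rq →
      κl * ∑ j, (β j) ^ 2 - τ ≤ β ⬝ᵥ (Γ *ᵥ β))
    (hβstar : ∑ j, |βstar j| ^ q ≤ Rq) (hβhat : ∑ j, |βhat j| ^ q ≤ Rq)
    (hopt : (1 / 2) * (βhat ⬝ᵥ (Γ *ᵥ βhat)) - Υ ⬝ᵥ βhat ≤
      (1 / 2) * (βstar ⬝ᵥ (Γ *ᵥ βstar)) - Υ ⬝ᵥ βstar) :
    κl * (∑ j, (βhat j - βstar j) ^ 2) - τ ≤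
      2 * (∑ j, |βhat j - βstar j|) * ‖Υ - Γ *ᵥ βstar‖ :=
  basic_inequality_re_general q Rq κl τ hq0 hq1 Γ hΓ Υ βstar βhat hRE hβstar hβhat hopt
end

section
/- Let Δ ∈ ℝⁿ satisfy Σ_j |Δ_j|^q ≤ 2R_q with q ∈ (0, 1], and suppose κ‖Δ‖₂² ≤ λ‖Δ‖₁ + τ₀ for positive κ, λ and τ₀ ≥ 0. Then ‖Δ‖₂² ≤ √(2R_q)(λ/κ)^{1−q/2}‖Δ‖₂ + 2R_q(λ/κ)^{2−q} + τ₀/κ. -/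
/-! Split the coordinates of `x` at a threshold `t > 0`. Since `∑ |x j| ^ q ≤ ρ`, Markov's inequality
leaves at most `ρ t⁻ᵠ` coordinates above `t`, whose `ℓ₁`-mass is at most `√(ρ t⁻ᵠ) ‖x‖₂` by
Cauchy–Schwarz; the coordinates below `t` satisfy `|x j| ≤ t ^ (1 - q) |x j| ^ q` and so carry
`ℓ₁`-mass at most `ρ t ^ (1 - q)`. With `t = λ / κ`, the cone condition `κ ‖Δ‖₂² ≤ λ ‖Δ‖₁ + τ₀`
becomes the claimed bound. -/

open Finset Real

namespace LqBall

variable {ι : Type*} [Fintype ι]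

lemma card_filter_lt_abs_mul_rpow_le {q t : ℝ} (hq : 0 ≤ q) (ht : 0 ≤ t) (x : ι → ℝ) :
    #{j | t < |x j|} * t ^ q ≤ ∑ j, |x j| ^ q := by
  calc (#{j | t < |x j|} : ℝ) * t ^ q = ∑ j with t < |x j|, t ^ q := by
        rw [sum_const, nsmul_eq_mul]
    _ ≤ ∑ j with t < |x j|, |x j| ^ q :=
        sum_le_sum fun j hj => rpow_le_rpow ht (mem_filter.mp hj).2.le hq
    _ ≤ ∑ j, |x j| ^ q :=
        sum_le_sum_of_subset_of_nonneg (filter_subset _ _) fun j _ _ => by positivity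

lemma sum_abs_le_sqrt_card_mul_sqrt_sum_sq (s : Finset ι) (x : ι → ℝ) :
    ∑ j ∈ s, |x j| ≤ √(#s : ℝ) * √(∑ j, x j ^ 2) := by
  have hsq : ∑ j ∈ s, |x j| ^ 2 ≤ ∑ j, x j ^ 2 := by
    simp only [sq_abs]
    exact sum_le_sum_of_subset_of_nonneg (subset_univ s) fun j _ _ => sq_nonneg _
  calc ∑ j ∈ s, |x j| = ∑ j ∈ s, 1 * |x j| := by simp only [one_mul]
    _ ≤ √(∑ j ∈ s, (1 : ℝ) ^ 2) * √(∑ j ∈ s, |x j| ^ 2) := sum_mul_le_sqrt_mul_sqrt s _ _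
    _ ≤ √(#s : ℝ) * √(∑ j, x j ^ 2) := by
        rw [one_pow, sum_const, nsmul_one]
        gcongr

lemma le_rpow_one_sub_mul_rpow {a t q : ℝ} (hq : q ≤ 1) (ha : 0 ≤ a) (hat : a ≤ t) :
    a ≤ t ^ (1 - q) * a ^ q := by
  rcases ha.eq_or_lt with rfl | ha
  · exact mul_nonneg (rpow_nonneg hat _) (rpow_nonneg le_rfl _)
  calc a = a ^ (1 - q) * a ^ q := by rw [← rpow_add ha, sub_add_cancel, rpow_one]
    _ ≤ t ^ (1 - q) * a ^ q := by gcongr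

lemma sum_abs_filter_abs_le_le {q t : ℝ} (hq : q ≤ 1) (ht : 0 ≤ t) (x : ι → ℝ) :
    ∑ j with |x j| ≤ t, |x j| ≤ t ^ (1 - q) * ∑ j, |x j| ^ q := by
  calc ∑ j with |x j| ≤ t, |x j| ≤ ∑ j with |x j| ≤ t, t ^ (1 - q) * |x j| ^ q :=
        sum_le_sum fun j hj => le_rpow_one_sub_mul_rpow hq (abs_nonneg _) (mem_filter.mp hj).2
    _ ≤ ∑ j, t ^ (1 - q) * |x j| ^ q :=
        sum_le_sum_of_subset_of_nonneg (filter_subset _ _) fun j _ _ => by positivity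
    _ = t ^ (1 - q) * ∑ j, |x j| ^ q := (mul_sum _ _ _).symm

theorem sum_abs_le_of_sum_abs_rpow_le {q ρ t : ℝ} (hq0 : 0 ≤ q) (hq1 : q ≤ 1) (ht : 0 < t)
    {x : ι → ℝ} (hx : ∑ j, |x j| ^ q ≤ ρ) :
    ∑ j, |x j| ≤ √ρ * t ^ (-(q / 2)) * √(∑ j, x j ^ 2) + ρ * t ^ (1 - q) := by
  have hcard : (#{j | t < |x j|} : ℝ) ≤ ρ * t ^ (-q) := by
    rw [rpow_neg ht.le, ← div_eq_mul_inv, le_div_iff₀ (rpow_pos_of_pos ht q)]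
    exact (card_filter_lt_abs_mul_rpow_le hq0 ht.le x).trans hx
  have hsqrt_card : √(#{j | t < |x j|} : ℝ) ≤ √ρ * t ^ (-(q / 2)) := by
    have hρ : 0 ≤ ρ := (sum_nonneg fun j _ => rpow_nonneg (abs_nonneg (x j)) q).trans hx
    calc √(#{j | t < |x j|} : ℝ) ≤ √(ρ * t ^ (-q)) := sqrt_le_sqrt hcard
      _ = √ρ * t ^ (-(q / 2)) := by
        rw [sqrt_mul hρ, sqrt_eq_rpow (t ^ (-q)), ← rpow_mul ht.le, neg_mul, mul_one_div]
  have htail : ∑ j with |x j| ≤ t, |x j| ≤ ρ * t ^ (1 - q) := by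
    rw [mul_comm]
    exact (sum_abs_filter_abs_le_le hq1 ht.le x).trans (by gcongr)
  rw [← sum_filter_add_sum_filter_not univ (fun j => t < |x j|)]
  simp only [not_lt]
  gcongr
  exact (sum_abs_le_sqrt_card_mul_sqrt_sum_sq _ x).trans (by gcongr)

end LqBall

open LqBall in
theorem l2_bound_lq_ball_general {n : ℕ} (q Rq κ lam τ₀ : ℝ) (hq0 : 0 < q) (hq1 : q ≤ 1)
    (hκ : 0 < κ) (hlam : 0 < lam) (Δ : Fin n → ℝ)
    (hΔ : ∑ j, |Δ j| ^ q ≤ 2 * Rq)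
    (h : κ * ∑ j, (Δ j) ^ 2 ≤ lam * ∑ j, |Δ j| + τ₀) :
    ∑ j, (Δ j) ^ 2 ≤
      Real.sqrt (2 * Rq) * (lam / κ) ^ (1 - q / 2) * Real.sqrt (∑ j, (Δ j) ^ 2)
        + 2 * Rq * (lam / κ) ^ (2 - q) + τ₀ / κ := by
  set t := lam / κ
  have ht : 0 < t := div_pos hlam hκ
  have hℓ₁ := sum_abs_le_of_sum_abs_rpow_le hq0.le hq1 ht hΔ
  have hscaled : t * ∑ j, |Δ j| ≤
      √(2 * Rq) * t ^ (1 - q / 2) * √(∑ j, Δ j ^ 2) + 2 * Rq * t ^ (2 - q) := by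
    calc t * ∑ j, |Δ j|
        ≤ t * (√(2 * Rq) * t ^ (-(q / 2)) * √(∑ j, Δ j ^ 2) + 2 * Rq * t ^ (1 - q)) := by gcongr
      _ = √(2 * Rq) * t ^ (1 - q / 2) * √(∑ j, Δ j ^ 2) + 2 * Rq * t ^ (2 - q) := by
        rw [show 1 - q / 2 = 1 + -(q / 2) by ring, show 2 - q = 1 + (1 - q) by ring,
          rpow_add ht, rpow_add ht, rpow_one]
        ring
  have hcone : ∑ j, Δ j ^ 2 ≤ t * ∑ j, |Δ j| + τ₀ / κ := by
    calc ∑ j, Δ j ^ 2 ≤ (lam * ∑ j, |Δ j| + τ₀) / κ := (le_div_iff₀' hκ).mpr h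
      _ = t * ∑ j, |Δ j| + τ₀ / κ := by ring
  linarith

theorem l2_bound_lq_ball {n : ℕ} (q Rq κ lam τ₀ : ℝ) (hq0 : 0 < q) (hq1 : q ≤ 1)
    (hκ : 0 < κ) (hlam : 0 < lam) (hτ₀ : 0 ≤ τ₀) (Δ : Fin n → ℝ)
    (hΔ : ∑ j, |Δ j| ^ q ≤ 2 * Rq)
    (h : κ * ∑ j, (Δ j) ^ 2 ≤ lam * ∑ j, |Δ j| + τ₀) :
    ∑ j, (Δ j) ^ 2 ≤
      Real.sqrt (2 * Rq) * (lam / κ) ^ (1 - q / 2) * Real.sqrt (∑ j, (Δ j) ^ 2)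
        + 2 * Rq * (lam / κ) ^ (2 - q) + τ₀ / κ :=
  l2_bound_lq_ball_general q Rq κ lam τ₀ hq0 hq1 hκ hlam Δ hΔ h
end
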